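/- Let R ∈ H₀ be such that R ≠ T(R). If T is a ring containing R such that Spec(R) = Spec(T), then the complete integral closure of R in T(R) equals the complete integral closure of T in its total quotient ring, i.e., C(R) = C(T). -/

import Mathlib

/-- A subset `S` of a ring `A` is (the underlying set of) a prime ideal of the subring `B`. -/
def IsPrimeIdealSetOf {A : Type*} [CommRing A] (B : Subring A) (S : Set A) : Prop :=
  ∃ I : Ideal B, I.IsPrime ∧ Subtype.val '' (I : Set B) = S

/-- `Spec(R) = Spec(T)` for a subring `R` of `T`: a subset of `T` is a prime ideal of `T`
iff it is a prime ideal of `R`. -/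
def SpecEq {T : Type*} [CommRing T] (R : Subring T) : Prop :=
  ∀ S : Set T, (∃ J : Ideal T, J.IsPrime ∧ (J : Set T) = S) ↔ IsPrimeIdealSetOf R S
/-- An ideal `P` of `R` is divided if it is comparable with every ideal of `R`. -/
def Ideal.IsDivided {R : Type*} [CommRing R] (P : Ideal R) : Prop :=
  ∀ I : Ideal R, I ≤ P ∨ P ≤ I

/-- `R ∈ H` : the nilradical of `R` is a divided prime ideal. -/
def MemH (R : Type*) [CommRing R] : Prop :=
  (nilradical R).IsPrime ∧ (nilradical R).IsDivided
/-- `R ∈ H₀` : `R ∈ H` and `Nil(R) = Z(R)` (the nilradical is the set of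
zero-divisors). -/
def MemH0 (R : Type*) [CommRing R] : Prop :=
  MemH R ∧ (nilradical R : Set R) = {x : R | x ∉ nonZeroDivisors R}

/-- The complete integral closure, inside the total quotient ring of the ambient ring `T`,
of a subring `R` of `T` : the elements `x` such that `c·xⁿ ∈ R` for all `n ≥ 1`, for some
non-zero-divisor `c` of `R`. -/
def CICin {T : Type*} [CommRing T] (R : Subring T) : Set (FractionRing T) :=
  {x : FractionRing T | ∃ c : ↥R, c ∈ nonZeroDivisors ↥R ∧ ∀ n : ℕ, 1 ≤ n →
    algebraMap T (FractionRing T) ↑c * x ^ n ∈ algebraMap T (FractionRing T) '' (R : Set T)}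

/-! Every maximal ideal of `T` is a prime ideal of `R`, so all nonunits of `T` lie in `R`, while a
nonunit `b` of `R` is contained in a prime of `T` and so stays a nonunit of `T`.  Then `b * t` is a
nonunit of `T` for every `t`, i.e. `b T ⊆ R`.  Since `R ≠ T(R)`, such a `b` can be chosen to be a
non-zero-divisor, and a denominator `c ∈ T` witnessing almost integrality over `T` is replaced by
`b * c ∈ R`.  Conversely, a non-zero-divisor `c` of `R` kills no nonunit of `T` (these lie in `R`)
and no unit, so it stays a non-zero-divisor of `T`. -/

lemma exists_not_isUnit_mem_nonZeroDivisors {A : Type*} [CommRing A]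
    (h : ¬ Function.Surjective (algebraMap A (FractionRing A))) :
    ∃ b ∈ nonZeroDivisors A, ¬ IsUnit b := by
  rw [← IsFractionRing.self_iff_surjective, IsFractionRing.self_iff_nonZeroDivisors_le_isUnit,
    SetLike.not_le_iff_exists] at h
  exact h

namespace SpecEq

variable {T : Type*} [CommRing T] {R : Subring T}

lemma mem_of_not_isUnit (hspec : SpecEq R) {t : T} (ht : ¬ IsUnit t) : t ∈ R := by
  obtain ⟨M, hM, htM⟩ := exists_max_ideal_of_mem_nonunits (mem_nonunits_iff.mpr ht)
  obtain ⟨I, -, hI⟩ := (hspec M).mp ⟨M, hM.isPrime, rfl⟩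
  obtain ⟨r, -, rfl⟩ : t ∈ Subtype.val '' (I : Set R) := hI ▸ htM
  exact r.2

lemma not_isUnit_coe (hspec : SpecEq R) {b : R} (hb : ¬ IsUnit b) : ¬ IsUnit (b : T) := by
  obtain ⟨I, hI, hbI⟩ := exists_max_ideal_of_mem_nonunits (mem_nonunits_iff.mpr hb)
  obtain ⟨J, hJ, hJI⟩ := (hspec _).mpr ⟨I, hI.isPrime, rfl⟩
  have hbJ : (b : T) ∈ (J : Set T) := hJI ▸ ⟨b, hbI, rfl⟩
  exact fun hunit ↦ hJ.ne_top (J.eq_top_of_isUnit_mem hbJ hunit)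

lemma mul_mem_of_not_isUnit (hspec : SpecEq R) {b : R} (hb : ¬ IsUnit b) (t : T) :
    (b : T) * t ∈ R :=
  hspec.mem_of_not_isUnit fun hbt ↦ hspec.not_isUnit_coe hb (isUnit_of_mul_isUnit_left hbt)

lemma coe_mem_nonZeroDivisors (hspec : SpecEq R) {c : R} (hc : c ∈ nonZeroDivisors R) :
    (c : T) ∈ nonZeroDivisors T := by
  refine mem_nonZeroDivisors_iff_right.mpr fun t htc ↦ ?_
  by_cases ht : IsUnit t
  · -- `c = 0` forces `R`, hence `T`, to be the zero ring
    have hc0 : c = 0 := Subtype.ext ((ht.mul_right_eq_zero).mp htc)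
    have h10 : (1 : R) = 0 := (mem_nonZeroDivisors_iff_right.mp hc) 1 (by simp [hc0])
    simpa using congrArg (t * ·) (congrArg Subtype.val h10)
  · have htR := hspec.mem_of_not_isUnit ht
    have : (⟨t, htR⟩ : R) * c = 0 := Subtype.ext htc
    simpa using congrArg Subtype.val ((mem_nonZeroDivisors_iff_right.mp hc) _ this)

end SpecEq

theorem stmt14_general {T : Type*} [CommRing T] (R : Subring T)
    (hneq : ¬ Function.Surjective (algebraMap ↥R (FractionRing ↥R)))
    (hspec : SpecEq R) :
    CICin R = {x : FractionRing T | ∃ c ∈ nonZeroDivisors T, ∀ n : ℕ, 1 ≤ n →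
      algebraMap T (FractionRing T) c * x ^ n ∈ (algebraMap T (FractionRing T)).range} := by
  obtain ⟨b, hb, hbu⟩ := exists_not_isUnit_mem_nonZeroDivisors hneq
  ext x
  constructor
  · rintro ⟨c, hc, hpow⟩
    refine ⟨c, hspec.coe_mem_nonZeroDivisors hc, fun n hn ↦ ?_⟩
    obtain ⟨t, -, ht⟩ := hpow n hn
    exact ⟨t, ht⟩
  · rintro ⟨c, hc, hpow⟩
    have hbc : (⟨b * c, hspec.mul_mem_of_not_isUnit hbu c⟩ : R) ∈ nonZeroDivisors R :=
      mem_nonZeroDivisors_of_injective (f := R.subtype) Subtype.val_injective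
        (mul_mem (hspec.coe_mem_nonZeroDivisors hb) hc)
    refine ⟨_, hbc, fun n hn ↦ ?_⟩
    obtain ⟨t, ht⟩ := hpow n hn
    refine ⟨b * t, hspec.mul_mem_of_not_isUnit hbu t, ?_⟩
    simp only [map_mul, ht, mul_assoc]

/-- Let `R ∈ H₀` with `R ≠ T(R)`.  If `T` is a ring containing `R` with
`Spec(R) = Spec(T)`, then `C(R) = C(T)` (both computed inside the common total quotient
ring). -/
theorem stmt14 {T : Type*} [CommRing T] (R : Subring T)
    (h0 : MemH0 ↥R)
    (hneq : ¬ Function.Surjective (algebraMap ↥R (FractionRing ↥R)))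
    (hspec : SpecEq R) :
    CICin R = {x : FractionRing T | ∃ c ∈ nonZeroDivisors T, ∀ n : ℕ, 1 ≤ n →
      algebraMap T (FractionRing T) c * x ^ n ∈ (algebraMap T (FractionRing T)).range} :=
  stmt14_general R hneq hspec
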